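/- arXiv:0901.1991 — 2 statements merged into one kernel-verified Lean document; each statement's English description precedes it below -/
import Mathlib

section
/- Let E be the open unit disc in ℂ and let T be an open subset of the closed unit disc Ē. Then the relative extremal function satisfies ω(0, T ∩ E, E) ≤ (1/2π) ∫₀^{2π} 1_{∂E \ T}(e^{iθ}) dθ, i.e., the value at 0 of the relative extremal function of T ∩ E in E is at most the normalized Lebesgue measure of the part of the unit circle not covered by T. -/
open Complex Metric Filter Set MeasureTheory
open scoped Topology Real Manifold

noncomputable section

/-- Plurisubharmonic (subharmonic when `V = ℂ`) real-valued function on a set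
in a complex normed space: upper semicontinuous plus the sub-mean value
inequality over small circles in every complex direction. -/
def PSHOn {V : Type*} [NormedAddCommGroup V] [NormedSpace ℂ V]
    (u : V → ℝ) (D : Set V) : Prop :=
  UpperSemicontinuousOn u D ∧
  ∀ z ∈ D, ∀ v : V, ∀ᶠ r in 𝓝[>] (0:ℝ),
    u z ≤ (1 / (2 * Real.pi)) *
      ∫ θ in (0:ℝ)..(2 * Real.pi), u (z + (Complex.ofReal r * Complex.exp (θ * Complex.I)) • v)

/-- The (unregularized) extremal function `h_{A,D}` relative to the canonical
system of approach regions. -/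
def hFun {V : Type*} [NormedAddCommGroup V] [NormedSpace ℂ V]
    (A D : Set V) : V → ℝ := fun z =>
  sSup ((fun u : V → ℝ => u z) ''
    {u | PSHOn u D ∧ (∀ x ∈ D, u x ≤ 1) ∧ ∀ a ∈ A, Filter.limsup u (𝓝[D] a) ≤ 0})

/-- The relative extremal function `ω(·, A, D)` (canonical approach regions):
the upper semicontinuous regularization of `h_{A,D}`. -/
def omegaC {V : Type*} [NormedAddCommGroup V] [NormedSpace ℂ V]
    (A D : Set V) (z : V) : ℝ :=
  Filter.limsup (hFun A D) (𝓝[D] z)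

/-! Fix `δ > 0`. Arclength on the circle is outer regular, so `∂E \ T` has an open neighbourhood
`W` whose trace on the circle is longer by less than `δ`. The Poisson integral `H` of `1_W` is a
nonnegative harmonic function on `E` tending to `1` at every point of `W ∩ ∂E`. A competitor `u`
in the definition of `ω` is `≤ 1`, and `≤ 0` on `T ∩ E`, hence near every point of `T ∩ ∂E`
because `T` is relatively open; so `u - H` has nonpositive upper limits on the whole circle and
the maximum principle gives `u ≤ H`. Therefore `ω(0) ≤ H(0)`, the normalized length of
`W ∩ ∂E`. -/

open Real (circleAverage)
open InnerProductSpace (HarmonicOnNhd)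

theorem exists_mem_closure_forall_frequently_lt {X β : Type*} [TopologicalSpace X]
    [ConditionallyCompleteLinearOrder β] [TopologicalSpace β] [OrderTopology β] {U : Set X}
    (hU : IsCompact (closure U)) (hne : U.Nonempty) {v : X → β} (hv : BddAbove (v '' U)) :
    ∃ x ∈ closure U, ∀ b < sSup (v '' U), ∃ᶠ y in 𝓝[U] x, b < v y := by
  set c := sSup (v '' U)
  have : (𝓟 U ⊓ comap v (𝓝 c)).NeBot := by
    rw [Filter.neBot_inf_comap_iff_map, map_principal, inf_comm]
    exact (isLUB_csSup (hne.image v) hv).nhdsWithin_neBot (hne.image v)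
  obtain ⟨x, hx, hcl⟩ := hU.exists_clusterPt (f := 𝓟 U ⊓ comap v (𝓝 c))
    (inf_le_left.trans (principal_mono.2 subset_closure))
  have hcl' : (𝓝[U] x ⊓ comap v (𝓝 c)).NeBot := by rw [nhdsWithin, inf_assoc]; exact hcl
  refine ⟨x, hx, fun b hb => ?_⟩
  have hev : ∀ᶠ y in 𝓝[U] x ⊓ comap v (𝓝 c), b < v y :=
    mem_inf_of_right (preimage_mem_comap (Ioi_mem_nhds hb))
  exact hev.frequently.filter_mono inf_le_left

theorem UpperSemicontinuousWithinAt.le_of_forall_frequently_lt {X β : Type*}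
    [TopologicalSpace X] [LinearOrder β] [DenselyOrdered β] {v : X → β} {s : Set X} {x : X}
    (hv : UpperSemicontinuousWithinAt v s x) {c : β} (h : ∀ b < c, ∃ᶠ y in 𝓝[s] x, b < v y) :
    c ≤ v x := by
  by_contra! hlt
  obtain ⟨b, hxb, hbc⟩ := exists_between hlt
  obtain ⟨y, hby, hyb⟩ := ((h b hbc).and_eventually (hv b hxb)).exists
  exact lt_asymm hby hyb

theorem circleAverage_norm_sq (c : ℂ) (r : ℝ) :
    circleAverage (fun z => ‖z‖ ^ 2) c r = ‖c‖ ^ 2 + r ^ 2 := by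
  have h : ∀ θ : ℝ, ‖circleMap c r θ‖ ^ 2
      = (‖c‖ ^ 2 + r ^ 2) + 2 * r * c.re * Real.cos θ + 2 * r * c.im * Real.sin θ := by
    intro θ
    rw [← Complex.normSq_eq_norm_sq, ← Complex.normSq_eq_norm_sq]
    simp only [circleMap, Complex.normSq_apply, add_re, add_im, mul_re, mul_im, ofReal_re,
      ofReal_im, exp_ofReal_mul_I_re, exp_ofReal_mul_I_im]
    nlinarith [Real.sin_sq_add_cos_sq θ]
  simp only [Real.circleAverage_def, h]
  have hint : ∀ f : ℝ → ℝ, Continuous f → IntervalIntegrable f volume 0 (2 * π) :=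
    fun f hf => hf.intervalIntegrable _ _
  rw [intervalIntegral.integral_add (hint _ (by fun_prop)) (hint _ (by fun_prop)),
    intervalIntegral.integral_add (hint _ (by fun_prop)) (hint _ (by fun_prop))]
  simp [intervalIntegral.integral_const_mul]
  field_simp

theorem PSHOn.eventually_le_circleAverage {u : ℂ → ℝ} {U : Set ℂ} (hu : PSHOn u U) {z : ℂ}
    (hz : z ∈ U) : ∀ᶠ r in 𝓝[>] (0:ℝ), u z ≤ circleAverage u z r := by
  filter_upwards [hu.2 z hz 1] with r hr
  simpa [Real.circleAverage_def, circleMap] using hr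

theorem exists_mem_sphere_lt_of_le_circleAverage {u H : ℂ → ℝ} {z : ℂ} {r ε : ℝ} (hr : r ≠ 0)
    (hε : 0 < ε) (hu : CircleIntegrable u z r) (hsub : u z ≤ circleAverage u z r)
    (hH : HarmonicOnNhd H (closedBall z |r|)) :
    ∃ w ∈ sphere z |r|, u z - H z + ε * ‖z‖ ^ 2 < u w - H w + ε * ‖w‖ ^ 2 := by
  by_contra! hle
  have hHi : CircleIntegrable H z r :=
    (hH.continuousOn.mono sphere_subset_closedBall).circleIntegrable'
  have hqi : CircleIntegrable (fun w => ε * ‖w‖ ^ 2) z r :=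
    (by fun_prop : Continuous fun w : ℂ => ε * ‖w‖ ^ 2).continuousOn.circleIntegrable'
  have hq : circleAverage (fun w => ε * ‖w‖ ^ 2) z r = ε * (‖z‖ ^ 2 + r ^ 2) := by
    rw [← circleAverage_norm_sq]; exact Real.circleAverage_fun_smul (a := ε) (f := fun w => ‖w‖ ^ 2)
  have hmean := Real.circleAverage_mono_on_of_le_circle ((hu.sub hHi).add hqi) hle
  rw [Real.circleAverage_add (hu.sub hHi) hqi, Real.circleAverage_sub hu hHi,
    hH.circleAverage_eq, hq] at hmean
  nlinarith [pow_pos (abs_pos.2 hr) 2, sq_abs r]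

theorem PSHOn.exists_lt_of_harmonicOnNhd {U : Set ℂ} (hUo : IsOpen U) {u H : ℂ → ℝ}
    (hu : PSHOn u U) (hH : HarmonicOnNhd H U) {ε : ℝ} (hε : 0 < ε) {x : ℂ} (hx : x ∈ U)
    (hux : 0 < u x) : ∃ w ∈ U, u x - H x + ε * ‖x‖ ^ 2 < u w - H w + ε * ‖w‖ ^ 2 := by
  obtain ⟨ρ, hρ, hρU⟩ := Metric.isOpen_iff.1 hUo x hx
  obtain ⟨r, hr, hr0, hrρ⟩ := ((hu.eventually_le_circleAverage hx).and
    (Ioo_mem_nhdsGT hρ)).exists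
  have hrU : closedBall x |r| ⊆ U := by
    rw [abs_of_pos hr0]; exact (closedBall_subset_ball hrρ).trans hρU
  -- on a circle where `u` is not integrable the integral is junk `0`, so `hr` says `u x ≤ 0`
  by_cases hint : CircleIntegrable u x r
  · obtain ⟨w, hw, hlt⟩ := exists_mem_sphere_lt_of_le_circleAverage hr0.ne' hε hint hr
      (fun y hy => hH y (hrU hy))
    exact ⟨w, hrU (sphere_subset_closedBall hw), hlt⟩
  · rw [Real.circleAverage.integral_undef hint] at hr
    exact absurd hr (not_le.2 hux)

/-- Adding `ε ‖z‖²` makes the sub-mean value inequality strict, so `u - H + ε ‖z‖²` cannot attain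
its supremum in `U`; by compactness of `closure U` it is then approached at the frontier. -/
theorem PSHOn.le_of_harmonicOnNhd {U : Set ℂ} (hUo : IsOpen U) (hUb : Bornology.IsBounded U)
    {u H : ℂ → ℝ} (hu : PSHOn u U) (hu_bdd : BddAbove (u '' U)) (hH : HarmonicOnNhd H U)
    (hH₀ : ∀ z ∈ U, 0 ≤ H z)
    (hbdry : ∀ ζ ∈ frontier U, ∀ ε > 0, ∀ᶠ z in 𝓝[U] ζ, u z ≤ H z + ε) {z : ℂ} (hz : z ∈ U) :
    u z ≤ H z := by
  by_contra! hp
  set d := u z - H z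
  have hd : 0 < d := sub_pos.2 hp
  obtain ⟨R, hR⟩ := hUb.subset_closedBall 0
  set ε := d / (2 * (R ^ 2 + 1))
  have hε : 0 < ε := by positivity
  have hq : ∀ w ∈ U, ε * ‖w‖ ^ 2 < d / 2 := by
    intro w hw
    have hw' : ‖w‖ ≤ R := by simpa using hR hw
    have : ε * ‖w‖ ^ 2 ≤ ε * R ^ 2 := by gcongr
    have : ε * R ^ 2 < d / 2 := by
      rw [div_mul_eq_mul_div, div_lt_div_iff₀ (by positivity) two_pos]; nlinarith
    linarith
  set v := fun w => u w - H w + ε * ‖w‖ ^ 2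
  obtain ⟨M, hM⟩ := hu_bdd
  have hv_bdd : BddAbove (v '' U) := by
    refine ⟨M + d / 2, ?_⟩
    rintro _ ⟨w, hw, rfl⟩
    linarith [hM (mem_image_of_mem u hw), hH₀ w hw, hq w hw]
  set c := sSup (v '' U)
  have hvc : ∀ w ∈ U, v w ≤ c := fun w hw => le_csSup hv_bdd (mem_image_of_mem v hw)
  have hdc : d ≤ c := le_trans (by simp only [v, d]; nlinarith [sq_nonneg ‖z‖]) (hvc z hz)
  obtain ⟨x, hxcl, hx⟩ :=
    exists_mem_closure_forall_frequently_lt hUb.isCompact_closure ⟨z, hz⟩ hv_bdd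
  by_cases hxU : x ∈ U
  swap
  · have hfr : x ∈ frontier U := ⟨hxcl, by rwa [hUo.interior_eq]⟩
    obtain ⟨y, hy, hyb, hyU⟩ := ((hx (3 * d / 4) (by linarith)).and_eventually
      ((hbdry x hfr (d / 4) (by positivity)).and self_mem_nhdsWithin)).exists
    linarith [hq y hyU]
  have hq_cont : Continuous fun w : ℂ => ε * ‖w‖ ^ 2 := by fun_prop
  have husc : UpperSemicontinuousWithinAt v U x :=
    (UpperSemicontinuousWithinAt.add (hu.1 x hxU)
      (hH.continuousOn x hxU).neg.upperSemicontinuousWithinAt).add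
      hq_cont.continuousWithinAt.upperSemicontinuousWithinAt
  have hcx : c ≤ v x := husc.le_of_forall_frequently_lt hx
  obtain ⟨w, hwU, hlt⟩ := hu.exists_lt_of_harmonicOnNhd hUo hH hε hxU
    (by linarith [hH₀ x hxU, hq x hxU])
  linarith [hvc w hwU]

theorem circleIntegrable_indicator_one {S : Set ℂ} (hS : MeasurableSet S) (c : ℂ) (R : ℝ) :
    CircleIntegrable (S.indicator fun _ => (1:ℝ)) c R := by
  refine (intervalIntegrable_const (c := (1:ℝ))).mono_fun
    ((measurable_const.indicator hS).comp
      (continuous_circleMap c R).measurable).aestronglyMeasurable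
    (Eventually.of_forall fun θ => ?_)
  simpa using norm_indicator_le_norm_self (fun _ => (1:ℝ)) (circleMap c R θ)

def poissonIntegral (g : ℂ → ℝ) (R : ℝ) (w : ℂ) : ℝ :=
  circleAverage (poissonKernel 0 w • g) 0 R

theorem harmonicOnNhd_poissonIntegral {g : ℂ → ℝ} {R : ℝ} (hg : CircleIntegrable g 0 R) :
    HarmonicOnNhd (poissonIntegral g R) (ball 0 R) := by
  set F := fun w => circleAverage (fun ζ => herglotzRieszKernel 0 w ζ • (g ζ : ℂ)) 0 R
  have hF : AnalyticOnNhd ℂ F (ball 0 R) :=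
    analyticOnNhd_circleAverage_herglotzRieszKernel_smul ⟨hg.1.ofReal, hg.2.ofReal⟩
  have hPF : EqOn (poissonIntegral g R) (fun w => (F w).re) (ball 0 R) := fun w hw => by
    simp only [F]
    rw [re_circleAverage_herglotzRieszKernel_smul hg hw, poissonIntegral,
      poissonKernel_eq_re_herglotzRieszKernel]
  intro w hw
  rw [InnerProductSpace.harmonicAt_congr_nhds (hPF.eventuallyEq_of_mem (isOpen_ball.mem_nhds hw))]
  exact (hF w hw).harmonicAt_re

theorem poissonIntegral_zero {g : ℂ → ℝ} {R : ℝ} (hR : R ≠ 0) :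
    poissonIntegral g R 0 = circleAverage g 0 R := by
  refine Real.circleAverage_congr_sphere fun z hz => ?_
  have hz0 : ‖z‖ ≠ 0 := by rw [mem_sphere_zero_iff_norm] at hz; rw [hz]; positivity
  simp [poissonKernel, hz0]

theorem sq_norm_le_sq_of_mem_ball {E : Type*} [SeminormedAddCommGroup E] {R : ℝ} {w : E}
    (hw : w ∈ ball 0 R) : ‖w‖ ^ 2 ≤ R ^ 2 := by
  rw [mem_ball_zero_iff] at hw
  gcongr

theorem poissonKernel_nonneg {R : ℝ} {w z : ℂ} (hw : w ∈ ball 0 R) (hz : z ∈ sphere 0 |R|) :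
    0 ≤ poissonKernel 0 w z := by
  rw [mem_sphere_zero_iff_norm] at hz
  simp only [poissonKernel, sub_zero, hz, sq_abs]
  exact div_nonneg (sub_nonneg.2 (sq_norm_le_sq_of_mem_ball hw)) (sq_nonneg _)

theorem poissonIntegral_nonneg {g : ℂ → ℝ} {R : ℝ} (hg : ∀ z ∈ sphere 0 |R|, 0 ≤ g z) {w : ℂ}
    (hw : w ∈ ball 0 R) : 0 ≤ poissonIntegral g R w :=
  Real.circleAverage_nonneg_of_nonneg fun z hz =>
    mul_nonneg (poissonKernel_nonneg hw hz) (hg z hz)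

theorem circleAverage_poissonKernel {R : ℝ} {w : ℂ} (hw : w ∈ ball 0 R) :
    circleAverage (poissonKernel 0 w) 0 R = 1 := by
  simpa [Pi.mul_def] using
    (InnerProductSpace.harmonicContOnCl_const (c := (1:ℝ))).circleAverage_poissonKernel_smul hw

theorem continuousOn_poissonKernel_sphere {R : ℝ} {w : ℂ} (hw : w ∈ ball 0 R) :
    ContinuousOn (poissonKernel 0 w) (sphere 0 |R|) := by
  rw [poissonKernel_eq_re_herglotzRieszKernel]
  exact continuous_re.comp_continuousOn (continuousOn_herglotzRieszKernel_sphere hw)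

theorem poissonKernel_le_of_le_norm_sub {R ρ : ℝ} {w z : ℂ} (hρ : 0 < ρ) (hw : w ∈ ball 0 R)
    (hz : z ∈ sphere 0 |R|) (hzw : ρ ≤ ‖z - w‖) :
    poissonKernel 0 w z ≤ (R ^ 2 - ‖w‖ ^ 2) / ρ ^ 2 := by
  rw [mem_sphere_zero_iff_norm] at hz
  simp only [poissonKernel, sub_zero, hz, sq_abs]
  have := sq_norm_le_sq_of_mem_ball hw
  gcongr

theorem one_sub_le_poissonIntegral_indicator {R ρ : ℝ} {W : Set ℂ} (hW : MeasurableSet W)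
    (hρ : 0 < ρ) {w : ℂ} (hw : w ∈ ball 0 R) (hWw : ∀ z ∈ sphere 0 |R|, z ∉ W → ρ ≤ ‖z - w‖) :
    1 - (R ^ 2 - ‖w‖ ^ 2) / ρ ^ 2 ≤ poissonIntegral (W.indicator fun _ => 1) R w := by
  have hP := continuousOn_poissonKernel_sphere hw
  have hC : 0 ≤ (R ^ 2 - ‖w‖ ^ 2) / ρ ^ 2 :=
    div_nonneg (sub_nonneg.2 (sq_norm_le_sq_of_mem_ball hw)) (sq_nonneg ρ)
  calc 1 - (R ^ 2 - ‖w‖ ^ 2) / ρ ^ 2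
      = circleAverage (poissonKernel 0 w - fun _ => (R ^ 2 - ‖w‖ ^ 2) / ρ ^ 2) 0 R := by
        rw [Real.circleAverage_sub hP.circleIntegrable' (circleIntegrable_const _ _ _),
          Real.circleAverage_const, circleAverage_poissonKernel hw]
    _ ≤ poissonIntegral (W.indicator fun _ => 1) R w := by
        refine Real.circleAverage_mono (hP.sub continuousOn_const).circleIntegrable'
          ((circleIntegrable_indicator_one hW 0 R).continuousOn_smul hP) fun z hz => ?_
        by_cases hzW : z ∈ W
        · simp [hzW, hC]
        · simp [hzW, poissonKernel_le_of_le_norm_sub hρ hw hz (hWw z hz hzW)]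

theorem poissonIntegral_indicator_nonneg {R : ℝ} (W : Set ℂ) {w : ℂ} (hw : w ∈ ball 0 R) :
    0 ≤ poissonIntegral (W.indicator fun _ => 1) R w :=
  poissonIntegral_nonneg (fun _ _ => indicator_nonneg (fun _ _ => zero_le_one) _) hw

theorem poissonIntegral_indicator_le_one {R : ℝ} {W : Set ℂ} (hW : MeasurableSet W) {w : ℂ}
    (hw : w ∈ ball 0 R) : poissonIntegral (W.indicator fun _ => 1) R w ≤ 1 := by
  have hP := continuousOn_poissonKernel_sphere hw
  refine (Real.circleAverage_mono ((circleIntegrable_indicator_one hW 0 R).continuousOn_smul hP)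
    hP.circleIntegrable' fun z hz => ?_).trans_eq (circleAverage_poissonKernel hw)
  by_cases hzW : z ∈ W <;> simp [hzW, poissonKernel_nonneg hw hz]

theorem tendsto_poissonIntegral_indicator_one {R : ℝ} {W : Set ℂ} (hW : IsOpen W) {ζ : ℂ}
    (hζW : ζ ∈ W) (hζ : ζ ∈ sphere 0 R) :
    Tendsto (poissonIntegral (W.indicator fun _ => 1) R) (𝓝[ball 0 R] ζ) (𝓝 1) := by
  obtain ⟨δ, hδ, hδW⟩ := Metric.isOpen_iff.1 hW ζ hζW
  have hlow : ∀ w ∈ ball 0 R ∩ ball ζ (δ / 2),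
      1 - (R ^ 2 - ‖w‖ ^ 2) / (δ / 2) ^ 2 ≤ poissonIntegral (W.indicator fun _ => 1) R w := by
    refine fun w ⟨hw, hwζ⟩ => one_sub_le_poissonIntegral_indicator hW.measurableSet
      (half_pos hδ) hw fun z _ hzW => ?_
    have hzζ : δ ≤ ‖z - ζ‖ := not_lt.1 fun h => hzW (hδW (mem_ball_iff_norm.2 h))
    linarith [mem_ball_iff_norm.1 hwζ, norm_sub_le_norm_sub_add_norm_sub z w ζ]
  have hlim : Tendsto (fun w => 1 - (R ^ 2 - ‖w‖ ^ 2) / (δ / 2) ^ 2) (𝓝[ball 0 R] ζ) (𝓝 1) := by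
    have hζR : ‖ζ‖ = R := by simpa using hζ
    refine tendsto_nhdsWithin_of_tendsto_nhds ?_
    simpa [hζR] using
      (by fun_prop : Continuous fun w : ℂ => 1 - (R ^ 2 - ‖w‖ ^ 2) / (δ / 2) ^ 2).tendsto ζ
  refine tendsto_of_tendsto_of_tendsto_of_le_of_le' hlim tendsto_const_nhds ?_ ?_
  · filter_upwards [inter_mem_nhdsWithin _ (ball_mem_nhds ζ (half_pos hδ))] with w hw
      using hlow w hw
  · filter_upwards [self_mem_nhdsWithin] with w hw
      using poissonIntegral_indicator_le_one hW.measurableSet hw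

theorem exists_isOpen_superset_circleAverage_indicator_lt {K : Set ℂ} (hK : MeasurableSet K)
    (c : ℂ) (R : ℝ) {ε : ℝ} (hε : 0 < ε) :
    ∃ W ⊇ K, IsOpen W ∧ circleAverage (W.indicator fun _ => (1:ℝ)) c R
      < circleAverage (K.indicator fun _ => (1:ℝ)) c R + ε := by
  set μ := (volume.restrict (Ioc 0 (2 * π))).map (circleMap c R)
  have hμ : ∀ S, MeasurableSet S →
      circleAverage (S.indicator fun _ => (1:ℝ)) c R = (2 * π)⁻¹ * μ.real S := fun S hS => by
    rw [Real.circleAverage_def, smul_eq_mul, intervalIntegral.integral_of_le Real.two_pi_pos.le,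
      ← integral_map (continuous_circleMap c R).aemeasurable
        (measurable_const.indicator hS).aestronglyMeasurable]
    exact congrArg _ (integral_indicator_one hS)
  obtain ⟨W, hKW, hW, hWμ⟩ := K.exists_isOpen_lt_of_lt (μ := μ) _
    (ENNReal.lt_add_right (measure_ne_top μ K)
      (ENNReal.ofReal_pos.2 (by positivity : 0 < 2 * π * ε)).ne')
  refine ⟨W, hKW, hW, ?_⟩
  have hWK : μ.real W < μ.real K + 2 * π * ε := by
    have := ENNReal.toReal_strict_mono (by finiteness) hWμ
    rwa [ENNReal.toReal_add (measure_ne_top _ _) ENNReal.ofReal_ne_top,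
      ENNReal.toReal_ofReal (by positivity)] at this
  rw [hμ W hW.measurableSet, hμ K hK]
  calc (2 * π)⁻¹ * μ.real W < (2 * π)⁻¹ * (μ.real K + 2 * π * ε) := by gcongr
    _ = (2 * π)⁻¹ * μ.real K + ε := by field_simp

theorem PSHOn.le_poissonIntegral_indicator {R : ℝ} {u : ℂ → ℝ} {V W : Set ℂ} (hV : IsOpen V)
    (hW : IsOpen W) (hVW : sphere 0 R ⊆ V ∪ W) (hu : PSHOn u (ball 0 R))
    (hu1 : ∀ z ∈ ball 0 R, u z ≤ 1) (hu0 : ∀ z ∈ V ∩ ball 0 R, u z ≤ 0) {z : ℂ}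
    (hz : z ∈ ball 0 R) : u z ≤ poissonIntegral (W.indicator fun _ => 1) R z := by
  have hH₀ : ∀ w ∈ ball 0 R, 0 ≤ poissonIntegral (W.indicator fun _ => 1) R w :=
    fun w => poissonIntegral_indicator_nonneg W
  refine hu.le_of_harmonicOnNhd isOpen_ball isBounded_ball ⟨1, ?_⟩
    (harmonicOnNhd_poissonIntegral (circleIntegrable_indicator_one hW.measurableSet 0 R)) hH₀
    ?_ hz
  · rintro _ ⟨w, hw, rfl⟩
    exact hu1 w hw
  rw [frontier_ball 0 (pos_of_mem_ball hz).ne']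
  intro ζ hζ ε hε
  rcases hVW hζ with hζV | hζW
  · filter_upwards [nhdsWithin_le_nhds (hV.mem_nhds hζV), self_mem_nhdsWithin] with w hwV hw
    linarith [hu0 w ⟨hwV, hw⟩, hH₀ w hw]
  · filter_upwards [(tendsto_poissonIntegral_indicator_one hW hζW hζ).eventually
      (lt_mem_nhds (sub_lt_self 1 hε)), self_mem_nhdsWithin] with w hHw hw
    linarith [hu1 w hw]

theorem le_limsup_nhdsWithin_of_mem {X : Type*} [TopologicalSpace X] {u : X → ℝ} {D : Set X}
    {a : X} {M : ℝ} (ha : a ∈ D) (hM : ∀ x ∈ D, u x ≤ M) : u a ≤ limsup u (𝓝[D] a) :=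
  le_limsup_of_frequently_le
    ((frequently_pure.2 le_rfl : ∃ᶠ x in pure a, u a ≤ u x).filter_mono (pure_le_nhdsWithin ha))
    ⟨M, eventually_map.2 (eventually_nhdsWithin_of_forall hM)⟩

theorem limsup_le_of_eventually_le_of_nonneg {α : Type*} {f : Filter α} {u : α → ℝ} {b : ℝ}
    (hb : 0 ≤ b) (h : ∀ᶠ x in f, u x ≤ b) : limsup u f ≤ b := by
  rw [limsup_eq]
  -- if the set of eventual upper bounds is not bounded below, its `sInf` is the junk value `0`
  by_cases hbd : BddBelow {a | ∀ᶠ x in f, u x ≤ a}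
  · exact csInf_le hbd h
  · rw [Real.sInf_of_not_bddBelow hbd]
    exact hb

section ExtremalFunction

variable {V : Type*} [NormedAddCommGroup V] [NormedSpace ℂ V] {A D : Set V} {H : V → ℝ}

theorem hFun_le_of_forall_le
    (hle : ∀ u, PSHOn u D → (∀ x ∈ D, u x ≤ 1) → (∀ a ∈ A, limsup u (𝓝[D] a) ≤ 0) →
      ∀ x ∈ D, u x ≤ H x)
    {x : V} (hx : x ∈ D) (hH : 0 ≤ H x) : hFun A D x ≤ H x :=
  Real.sSup_le (by rintro _ ⟨u, ⟨hu, hu1, hA⟩, rfl⟩; exact hle u hu hu1 hA x hx) hH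

theorem omegaC_le_of_forall_le
    (hle : ∀ u, PSHOn u D → (∀ x ∈ D, u x ≤ 1) → (∀ a ∈ A, limsup u (𝓝[D] a) ≤ 0) →
      ∀ x ∈ D, u x ≤ H x)
    (hH₀ : ∀ x ∈ D, 0 ≤ H x) {z : V} (hz : z ∈ D) (hHz : ContinuousWithinAt H D z) :
    omegaC A D z ≤ H z := by
  refine le_of_forall_pos_le_add fun η hη =>
    limsup_le_of_eventually_le_of_nonneg (by linarith [hH₀ z hz]) ?_
  filter_upwards [hHz.eventually (gt_mem_nhds (lt_add_of_pos_right (H z) hη)),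
    self_mem_nhdsWithin] with x hHx hx
  exact (hFun_le_of_forall_le hle hx (hH₀ x hx)).trans hHx.le

end ExtremalFunction

/-- Lemma 1 of the paper: for `E` the open unit disc and `T` an
open subset of the closed unit disc, `ω(0, T ∩ E, E)` is at most the normalized
arclength measure of the part of the unit circle not covered by `T`. -/
theorem relative_extremal_le_circle_measure
    (T : Set ℂ) (hT : ∃ V : Set ℂ, IsOpen V ∧ T = V ∩ closedBall (0:ℂ) 1) :
    omegaC (T ∩ ball (0:ℂ) 1) (ball (0:ℂ) 1) 0 ≤
      (1 / (2 * Real.pi)) * ∫ θ in (0:ℝ)..(2 * Real.pi),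
        Set.indicator (sphere (0:ℂ) 1 \ T) (fun _ => (1:ℝ))
          (Complex.exp (θ * Complex.I)) := by
  obtain ⟨V, hV, rfl⟩ := hT
  set K := sphere (0:ℂ) 1 \ (V ∩ closedBall 0 1)
  have hK : MeasurableSet K :=
    isClosed_sphere.measurableSet.diff (hV.measurableSet.inter measurableSet_closedBall)
  have hrhs : (1 / (2 * π)) * ∫ θ in (0:ℝ)..(2 * π), K.indicator (fun _ => (1:ℝ))
      (Complex.exp (θ * Complex.I)) = circleAverage (K.indicator fun _ => 1) 0 1 := by
    simp [Real.circleAverage_def, circleMap]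
  rw [hrhs]
  refine le_of_forall_pos_lt_add fun δ hδ => ?_
  obtain ⟨W, hKW, hW, hWδ⟩ := exists_isOpen_superset_circleAverage_indicator_lt hK 0 1 hδ
  have hVW : sphere (0:ℂ) 1 ⊆ V ∪ W := fun ζ hζ =>
    or_iff_not_imp_left.2 fun hζV => hKW ⟨hζ, fun h => hζV h.1⟩
  have h0 : (0:ℂ) ∈ ball (0:ℂ) 1 := mem_ball_self one_pos
  have hH := harmonicOnNhd_poissonIntegral (circleIntegrable_indicator_one hW.measurableSet 0 1)
  calc _ ≤ poissonIntegral (W.indicator fun _ => 1) 1 0 := by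
        refine omegaC_le_of_forall_le (fun u hu hu1 hA z hz => ?_)
          (fun w => poissonIntegral_indicator_nonneg W) h0 (hH.continuousOn 0 h0)
        refine hu.le_poissonIntegral_indicator hV hW hVW hu1 (fun a ha => ?_) hz
        exact (le_limsup_nhdsWithin_of_mem ha.2 hu1).trans
          (hA a ⟨⟨ha.1, ball_subset_closedBall ha.2⟩, ha.2⟩)
    _ = circleAverage (W.indicator fun _ => 1) 0 1 := poissonIntegral_zero one_ne_zero
    _ < _ := hWδ

end
end

section
/- The map f : ℂ² → ℙ¹ defined by f(z,w) = [(z+w)² : (z−w)²] for (z,w) ≠ (0,0) and f(0,0) = [1:1] is separately holomorphic (f(a,·) and f(·,b) are holomorphic on ℂ for all fixed a,b ∈ ℂ) but f is not continuous at (0,0). -/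
/-!
Away from the origin `f(z, w) = [(z+w)² : (z−w)²]` is a pair of polynomials without common zero,
hence holomorphic into `ℙ¹` in each variable; on the axes `z = 0` and `w = 0` it is constantly
`[1 : 1]`, so fixing one coordinate never sees the bad point. On the diagonal, however, `f = ∞`,
which does not tend to `f(0, 0) = [1 : 1]`.
-/

open Complex Filter Set OnePoint
open scoped Topology OnePoint

noncomputable section

/-- Holomorphy of a map from `ℂ` to the Riemann sphere `ℙ¹ ≅ OnePoint ℂ`:
around each point the map is given, in one of the two standard charts, by a
holomorphic `ℂ`-valued function. -/
def HoloToSphere (g : ℂ → OnePoint ℂ) : Prop :=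
  ∀ z : ℂ, ∃ U : Set ℂ, IsOpen U ∧ z ∈ U ∧
    ((∃ h : ℂ → ℂ, DifferentiableOn ℂ h U ∧ ∀ x ∈ U, g x = (h x : OnePoint ℂ)) ∨
     (∃ h : ℂ → ℂ, DifferentiableOn ℂ h U ∧
        ∀ x ∈ U, g x = if h x = 0 then (∞ : OnePoint ℂ) else ((h x)⁻¹ : ℂ)))

/-- Shiffman's example: the map `(z,w) ↦ [(z+w)² : (z−w)²]` in homogeneous
coordinates, realized on the Riemann sphere as `(z+w)²/(z−w)²`, with value
`[1:1] = 1` at the origin. -/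
def shiffmanMap : ℂ × ℂ → OnePoint ℂ := fun p =>
  if p = (0, 0) then ((1 : ℂ) : OnePoint ℂ)
  else if p.1 = p.2 then (∞ : OnePoint ℂ)
  else (((p.1 + p.2) ^ 2 / (p.1 - p.2) ^ 2 : ℂ) : OnePoint ℂ)

/-- The point `[p : q]` of `ℙ¹` on the Riemann sphere; `projDiv 0 0 = ∞` is a junk value. -/
def projDiv (p q : ℂ) : OnePoint ℂ :=
  if q = 0 then ∞ else ((p / q : ℂ) : OnePoint ℂ)

lemma holoToSphere_const (c : ℂ) : HoloToSphere fun _ => (c : OnePoint ℂ) :=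
  fun z => ⟨univ, isOpen_univ, mem_univ z, Or.inl ⟨fun _ => c, differentiableOn_const c,
    fun _ _ => rfl⟩⟩

/-- Near a zero of `q` the chart at `∞` is used, with local coordinate `q / p`. -/
lemma holoToSphere_projDiv {p q : ℂ → ℂ} (hp : Differentiable ℂ p) (hq : Differentiable ℂ q)
    (hpq : ∀ z, p z ≠ 0 ∨ q z ≠ 0) : HoloToSphere fun z => projDiv (p z) (q z) := by
  intro z
  by_cases hqz : q z = 0
  · have hpz : p z ≠ 0 := (hpq z).resolve_right (not_not.mpr hqz)
    refine ⟨{x | p x ≠ 0}, isOpen_ne_fun hp.continuous continuous_const, hpz,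
      Or.inr ⟨fun x => q x / p x, hq.differentiableOn.div hp.differentiableOn fun _ h => h, ?_⟩⟩
    intro x hx
    by_cases hqx : q x = 0
    · simp [projDiv, hqx]
    · simp [projDiv, hqx, hx.out]
  · exact ⟨{x | q x ≠ 0}, isOpen_ne_fun hq.continuous continuous_const, hqz,
      Or.inl ⟨fun x => p x / q x, hp.differentiableOn.div hq.differentiableOn fun _ h => h,
        fun x hx => if_neg hx⟩⟩

lemma shiffmanMap_eq_projDiv {x : ℂ × ℂ} (hx : x ≠ (0, 0)) :
    shiffmanMap x = projDiv ((x.1 + x.2) ^ 2) ((x.1 - x.2) ^ 2) := by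
  simp [shiffmanMap, projDiv, hx, sub_eq_zero]

lemma shiffmanMap_swap (x : ℂ × ℂ) : shiffmanMap x.swap = shiffmanMap x := by
  by_cases hx : x = (0, 0)
  · simp [hx]
  · have hswap : x.swap ≠ (0, 0) := fun h => hx (by simpa using congrArg Prod.swap h)
    rw [shiffmanMap_eq_projDiv hswap, shiffmanMap_eq_projDiv hx]
    simp only [Prod.fst_swap, Prod.snd_swap]
    ring_nf

lemma shiffmanMap_zero_left (w : ℂ) : shiffmanMap (0, w) = ((1 : ℂ) : OnePoint ℂ) := by
  by_cases hw : w = 0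
  · simp [shiffmanMap, hw]
  · simp [shiffmanMap_eq_projDiv (x := (0, w)) (by simpa using hw), projDiv, hw]

lemma shiffmanMap_diag {t : ℂ} (ht : t ≠ 0) : shiffmanMap (t, t) = ∞ := by
  simp [shiffmanMap_eq_projDiv (x := (t, t)) (by simpa using ht), projDiv]

lemma holoToSphere_shiffmanMap_left (a : ℂ) : HoloToSphere fun w => shiffmanMap (a, w) := by
  by_cases ha : a = 0
  · simpa [ha, shiffmanMap_zero_left] using holoToSphere_const 1
  · have hsplit : (fun w => shiffmanMap (a, w)) =
        fun w => projDiv ((a + w) ^ 2) ((a - w) ^ 2) :=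
      funext fun w => shiffmanMap_eq_projDiv (by simp [ha])
    rw [hsplit]
    refine holoToSphere_projDiv (by fun_prop) (by fun_prop) fun w => ?_
    by_contra! h
    exact ha (by linear_combination (pow_eq_zero_iff two_ne_zero).mp h.1 / 2 +
      (pow_eq_zero_iff two_ne_zero).mp h.2 / 2)

lemma not_continuousAt_shiffmanMap_zero : ¬ ContinuousAt shiffmanMap (0, 0) := by
  intro hc
  have hdiag : Tendsto (fun t : ℂ => shiffmanMap (t, t)) (𝓝[≠] 0) (𝓝 (shiffmanMap (0, 0))) :=
    (hc.tendsto.comp ((continuous_id.prodMk continuous_id).tendsto 0)).mono_left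
      nhdsWithin_le_nhds
  have hinf : ∀ᶠ t in 𝓝[≠] (0 : ℂ), shiffmanMap (t, t) = ∞ :=
    eventually_nhdsWithin_of_forall fun _ ht => shiffmanMap_diag ht
  have h := tendsto_nhds_unique (tendsto_const_nhds.congr' (hinf.mono fun _ h => h.symm)) hdiag
  simp [shiffmanMap] at h

/-- Shiffman's map is separately holomorphic in each variable but
not continuous at the origin. -/
theorem shiffmanMap_sep_holo_not_continuous :
    (∀ a : ℂ, HoloToSphere (fun w => shiffmanMap (a, w))) ∧
    (∀ b : ℂ, HoloToSphere (fun z => shiffmanMap (z, b))) ∧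
    ¬ ContinuousAt shiffmanMap (0, 0) := by
  refine ⟨holoToSphere_shiffmanMap_left, fun b => ?_, not_continuousAt_shiffmanMap_zero⟩
  simpa only [← shiffmanMap_swap (_, b), Prod.swap_prod_mk] using holoToSphere_shiffmanMap_left b

end
end
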